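/- Integrability near the manifold of global minima: assume √(σ1(M Σ^{1/2})) < 1/16 and set ε1 = (1/(2√‖Σ‖_op))·(1/16 − √(σ1(M Σ^{1/2}))). If θ = (A,B) ∈ ℝ^{(p+d)×d} satisfies ‖θ − s‖_P ≤ ε1 for some s ∈ S, then for x1 ~ N(0,Σ) both E[exp(8·x1ᵀ B x1)] < ∞ and E[exp(16·x1ᵀ B Σ Bᵀ x1)] < ∞. -/

import Mathlib

open MeasureTheory Matrix Real
open scoped BigOperators

noncomputable section

def vnorm {ι : Type*} [Fintype ι] (v : ι → ℝ) : ℝ := Real.sqrt (∑ i, (v i) ^ 2)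

def frob {ι κ : Type*} [Fintype ι] [Fintype κ] (A : Matrix ι κ ℝ) : ℝ :=
  Real.sqrt (∑ i, ∑ j, (A i j) ^ 2)

def opN {ι κ : Type*} [Fintype ι] [Fintype κ] (A : Matrix ι κ ℝ) : ℝ :=
  sSup {r | ∃ x : κ → ℝ, vnorm x ≤ 1 ∧ r = vnorm (A.mulVec x)}

def svalMax {ι κ : Type*} [Fintype ι] [Fintype κ] (A : Matrix ι κ ℝ) : ℝ :=
  sSup {r | ∃ x : κ → ℝ, vnorm x = 1 ∧ r = vnorm (A.mulVec x)}

def svalMin {ι κ : Type*} [Fintype ι] [Fintype κ] (A : Matrix ι κ ℝ) : ℝ :=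
  sInf {r | ∃ x : κ → ℝ, vnorm x = 1 ∧ r = vnorm (A.mulVec x)}

def msqrt {ι : Type*} [Fintype ι] [DecidableEq ι] (S : Matrix ι ι ℝ) : Matrix ι ι ℝ :=
  @dite _ S.PosSemidef (Classical.dec _) (fun h => (h.1.eigenvectorUnitary : Matrix ι ι ℝ) *
    diagonal (((↑) : ℝ → ℝ) ∘ Real.sqrt ∘ h.1.eigenvalues) * (star h.1.eigenvectorUnitary : Matrix ι ι ℝ)) (fun _ => 0)

def gaussian {k : ℕ} (S : Matrix (Fin k) (Fin k) ℝ) : Measure (Fin k → ℝ) :=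
  Measure.map ((msqrt S).mulVec) (Measure.pi fun _ => ProbabilityTheory.gaussianReal 0 1)

/-- Population loss. -/
def popLoss {d p : ℕ} (Sig : Matrix (Fin d) (Fin d) ℝ) (Om : Matrix (Fin p) (Fin p) ℝ)
    (M A : Matrix (Fin p) (Fin d) ℝ) (B : Matrix (Fin d) (Fin d) ℝ) : ℝ :=
  (1/2) * ∫ w : (Fin d → ℝ) × (Fin p → ℝ),
      vnorm (A.mulVec
        ((∫ x2, Real.exp (w.1 ⬝ᵥ B.mulVec x2) ∂gaussian Sig)⁻¹ •
          ∫ x2, Real.exp (w.1 ⬝ᵥ B.mulVec x2) • x2 ∂gaussian Sig)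
        - (M.mulVec w.1 + w.2)) ^ 2
    ∂((gaussian Sig).prod (gaussian Om))

/-- Population regularizer. -/
def reg {d p : ℕ} (Sig : Matrix (Fin d) (Fin d) ℝ) (A : Matrix (Fin p) (Fin d) ℝ)
    (B : Matrix (Fin d) (Fin d) ℝ) : ℝ :=
  (1/8) * frob (msqrt Sig * (Aᵀ * A - Bᵀ * Sig * B) * msqrt Sig) ^ 2

/-- Vertical concatenation of `A` and `B`. -/
def vcat {d p : ℕ} (A : Matrix (Fin p) (Fin d) ℝ) (B : Matrix (Fin d) (Fin d) ℝ) :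
    Matrix (Fin p ⊕ Fin d) (Fin d) ℝ := Matrix.of (Sum.elim A B)

def topM {d p : ℕ} (θ : Matrix (Fin p ⊕ Fin d) (Fin d) ℝ) : Matrix (Fin p) (Fin d) ℝ :=
  Matrix.of fun i j => θ (Sum.inl i) j

def botM {d p : ℕ} (θ : Matrix (Fin p ⊕ Fin d) (Fin d) ℝ) : Matrix (Fin d) (Fin d) ℝ :=
  Matrix.of fun i j => θ (Sum.inr i) j

/-- Extended covariance matrix `P = diag(I_p, Σ)`. -/
def Pmat (p : ℕ) {d : ℕ} (Sig : Matrix (Fin d) (Fin d) ℝ) :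
    Matrix (Fin p ⊕ Fin d) (Fin p ⊕ Fin d) ℝ :=
  Matrix.fromBlocks 1 0 0 Sig

def Pinner {d p : ℕ} (Sig : Matrix (Fin d) (Fin d) ℝ)
    (θ1 θ2 : Matrix (Fin p ⊕ Fin d) (Fin d) ℝ) : ℝ :=
  (θ1ᵀ * Pmat p Sig * θ2).trace

def Pnorm {d p : ℕ} (Sig : Matrix (Fin d) (Fin d) ℝ)
    (θ : Matrix (Fin p ⊕ Fin d) (Fin d) ℝ) : ℝ :=
  Real.sqrt (Pinner Sig θ θ)

attribute [local instance] Matrix.normedAddCommGroup Matrix.normedSpace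

/-- Gradient (w.r.t. the Frobenius inner product) of a scalar function of a matrix. -/
def matGrad {ι κ : Type*} [Fintype ι] [Fintype κ] [DecidableEq ι] [DecidableEq κ]
    (f : Matrix ι κ ℝ → ℝ) (θ : Matrix ι κ ℝ) : Matrix ι κ ℝ :=
  Matrix.of fun i j => fderiv ℝ f θ (Matrix.single i j 1)

/-- Regularized population loss as a function of the concatenated parameter. -/
def Qfun {d p : ℕ} (Sig : Matrix (Fin d) (Fin d) ℝ) (Om : Matrix (Fin p) (Fin p) ℝ)
    (M : Matrix (Fin p) (Fin d) ℝ) (θ : Matrix (Fin p ⊕ Fin d) (Fin d) ℝ) : ℝ :=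
  popLoss Sig Om M (topM θ) (botM θ) + reg Sig (topM θ) (botM θ)

def gradQ {d p : ℕ} (Sig : Matrix (Fin d) (Fin d) ℝ) (Om : Matrix (Fin p) (Fin p) ℝ)
    (M : Matrix (Fin p) (Fin d) ℝ) (θ : Matrix (Fin p ⊕ Fin d) (Fin d) ℝ) :
    Matrix (Fin p ⊕ Fin d) (Fin d) ℝ :=
  matGrad (Qfun Sig Om M) θ

/-- The manifold `S` of global minimizers. -/
def Sman {d p : ℕ} (Sig : Matrix (Fin d) (Fin d) ℝ) (U : Matrix (Fin p) (Fin d) ℝ)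
    (Γ V : Matrix (Fin d) (Fin d) ℝ) : Set (Matrix (Fin p ⊕ Fin d) (Fin d) ℝ) :=
  {θ | ∃ J : Matrix (Fin d) (Fin d) ℝ, Jᵀ * J = 1 ∧
    θ = vcat (U * msqrt Γ * Jᵀ * (msqrt Sig)⁻¹)
             ((msqrt Sig)⁻¹ * V * msqrt Γ * Jᵀ * (msqrt Sig)⁻¹)}

def K0 {d p : ℕ} (Sig : Matrix (Fin d) (Fin d) ℝ) (M : Matrix (Fin p) (Fin d) ℝ) : ℝ :=
  2 * svalMin (M * msqrt Sig) * svalMin Sig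

def K1 {d p : ℕ} (Sig : Matrix (Fin d) (Fin d) ℝ) (M : Matrix (Fin p) (Fin d) ℝ) : ℝ :=
  2 * svalMax (M * msqrt Sig) * svalMax Sig

def betaC {d p : ℕ} (Sig : Matrix (Fin d) (Fin d) ℝ) (M : Matrix (Fin p) (Fin d) ℝ) : ℝ :=
  (14 + 7 * (svalMax Sig / svalMin Sig) ^ 2) * K1 Sig M ^ 2
    + 21 * opN Sig ^ 2 * K1 Sig M + 7 * opN Sig ^ 4

def eps0 {d p : ℕ} (Sig : Matrix (Fin d) (Fin d) ℝ) (M : Matrix (Fin p) (Fin d) ℝ) : ℝ :=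
  min 1 (min (Real.sqrt (K0 Sig M / (3 * K1 Sig M * opN Sig)))
    (Real.sqrt (Real.sqrt (K0 Sig M / 2)) / Real.sqrt (opN Sig)))

def eps1 {d p : ℕ} (Sig : Matrix (Fin d) (Fin d) ℝ) (M : Matrix (Fin p) (Fin d) ℝ) : ℝ :=
  (1 / (2 * Real.sqrt (opN Sig))) * (1/16 - Real.sqrt (svalMax (M * msqrt Sig)))

/-- Softmax self-attention weights. -/
def softmaxW {d n : ℕ} (B : Matrix (Fin d) (Fin d) ℝ) (X : Fin n → Fin d → ℝ)
    (i j : Fin n) : ℝ :=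
  Real.exp (X i ⬝ᵥ B.mulVec (X j)) / ∑ k, Real.exp (X i ⬝ᵥ B.mulVec (X k))

/-- Softmax-weighted mean `μ_i`. -/
def wmean {d n : ℕ} (B : Matrix (Fin d) (Fin d) ℝ) (X : Fin n → Fin d → ℝ)
    (i : Fin n) : Fin d → ℝ :=
  ∑ j, softmaxW B X i j • X j


/-- Empirical covariance of a sample. -/
def empCov {d n : ℕ} (X : Fin n → Fin d → ℝ) : Matrix (Fin d) (Fin d) ℝ :=
  (n:ℝ)⁻¹ • ∑ i, Matrix.vecMulVec (X i) (X i)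

section AuxLemmas

open ProbabilityTheory

variable {ι κ : Type*} [Fintype ι] [Fintype κ]

lemma vnorm_nonneg (v : ι → ℝ) : 0 ≤ vnorm v := Real.sqrt_nonneg _
lemma frob_nonneg (A : Matrix ι κ ℝ) : 0 ≤ frob A := Real.sqrt_nonneg _

lemma vnorm_sq (v : ι → ℝ) : vnorm v ^ 2 = ∑ i, (v i) ^ 2 :=
  Real.sq_sqrt (Finset.sum_nonneg fun _ _ => sq_nonneg _)

lemma vnorm_le_of_sq_le {v : ι → ℝ} {c : ℝ} (hc : 0 ≤ c) (h : ∑ i, (v i) ^ 2 ≤ c ^ 2) :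
    vnorm v ≤ c := by
  rw [vnorm, show c = Real.sqrt (c ^ 2) by rw [Real.sqrt_sq hc]]
  exact Real.sqrt_le_sqrt h

lemma dot_le (u v : ι → ℝ) : u ⬝ᵥ v ≤ vnorm u * vnorm v := by
  simpa [dotProduct, vnorm] using Real.sum_mul_le_sqrt_mul_sqrt Finset.univ u v

lemma dot_self_eq (u : ι → ℝ) : u ⬝ᵥ u = ∑ i, (u i) ^ 2 := by
  simp [dotProduct, sq]

lemma vnorm_mulVec_le (A : Matrix ι κ ℝ) (x : κ → ℝ) :
    vnorm (A.mulVec x) ≤ frob A * vnorm x := by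
  refine vnorm_le_of_sq_le (mul_nonneg (frob_nonneg A) (vnorm_nonneg x)) ?_
  rw [mul_pow, vnorm_sq, frob, Real.sq_sqrt (by positivity), Finset.sum_mul]
  refine Finset.sum_le_sum fun i _ => ?_
  simpa [Matrix.mulVec, dotProduct] using Finset.sum_mul_sq_le_sq_mul_sq Finset.univ (A i) x

lemma vnorm_smul (c : ℝ) (v : ι → ℝ) : vnorm (c • v) = |c| * vnorm v := by
  simp only [vnorm, Pi.smul_apply, smul_eq_mul, mul_pow]
  rw [← Finset.mul_sum, Real.sqrt_mul (sq_nonneg c), Real.sqrt_sq_eq_abs]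

lemma vnorm_eq_zero_iff {v : ι → ℝ} : vnorm v = 0 ↔ v = 0 := by
  rw [vnorm, Real.sqrt_eq_zero (by positivity)]
  constructor
  · intro h; funext i
    have := (Finset.sum_eq_zero_iff_of_nonneg (fun i _ => sq_nonneg (v i))).1 h i
      (Finset.mem_univ i)
    simpa [pow_eq_zero_iff] using this
  · intro h; simp [h]

lemma vnorm_orth [DecidableEq κ] {W : Matrix ι κ ℝ} (hW : Wᵀ * W = 1) (x : κ → ℝ) :
    vnorm (W.mulVec x) = vnorm x := by
  have : (W.mulVec x) ⬝ᵥ (W.mulVec x) = x ⬝ᵥ x := by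
    rw [Matrix.dotProduct_mulVec, ← Matrix.mulVec_transpose, Matrix.mulVec_mulVec, hW,
      Matrix.one_mulVec]
  simp only [vnorm]
  rw [← dot_self_eq, ← dot_self_eq, this]

lemma vnorm_add_le (u v : ι → ℝ) : vnorm (u + v) ≤ vnorm u + vnorm v := by
  refine vnorm_le_of_sq_le (add_nonneg (vnorm_nonneg u) (vnorm_nonneg v)) ?_
  have h := dot_le u v
  have he : ∑ i, ((u + v) i) ^ 2 = (∑ i, (u i)^2) + 2 * (u ⬝ᵥ v) + ∑ i, (v i)^2 := by
    simp only [Pi.add_apply, dotProduct, Finset.mul_sum]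
    rw [← Finset.sum_add_distrib, ← Finset.sum_add_distrib]
    exact Finset.sum_congr rfl fun i _ => by ring
  rw [he, ← vnorm_sq u, ← vnorm_sq v]
  nlinarith [vnorm_nonneg u, vnorm_nonneg v]

lemma frob_transpose (A : Matrix ι κ ℝ) : frob Aᵀ = frob A := by
  rw [frob, frob, Finset.sum_comm]
  rfl

lemma frob_sq_eq_trace {A : Matrix ι κ ℝ} : frob A ^ 2 = (Aᵀ * A).trace := by
  rw [frob, Real.sq_sqrt (by positivity), Matrix.trace, Finset.sum_comm]
  exact Finset.sum_congr rfl fun j _ => by simp [Matrix.mul_apply, Matrix.diag, sq]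

lemma gauss1 {c : ℝ} (hc : c < 1/2) :
    Integrable (fun x : ℝ => Real.exp (c * x ^ 2)) (gaussianReal 0 1) := by
  rw [gaussianReal_of_var_ne_zero 0 one_ne_zero,
    integrable_withDensity_iff_integrable_smul' (measurable_gaussianPDF 0 1)
      (ae_of_all _ fun x => by rw [gaussianPDF_def]; exact ENNReal.ofReal_lt_top)]
  have heq : (fun x : ℝ => (gaussianPDF 0 1 x).toReal • Real.exp (c * x ^ 2))
      = fun x : ℝ => (Real.sqrt (2 * Real.pi))⁻¹ * Real.exp (-(1/2 - c) * x ^ 2) := by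
    funext x
    rw [gaussianPDF_def, ENNReal.toReal_ofReal (gaussianPDFReal_nonneg 0 1 x),
      gaussianPDFReal_def, smul_eq_mul]
    push_cast
    rw [mul_assoc, ← Real.exp_add]
    ring_nf
  rw [heq]
  exact (integrable_exp_neg_mul_sq (by linarith)).const_mul _

lemma gauss_pi {d : ℕ} {c : ℝ} (hc : c < 1/2) {f : (Fin d → ℝ) → ℝ} (hf : Continuous f)
    (hb : ∀ z, f z ≤ c * ∑ i, (z i) ^ 2) :
    Integrable (fun z => Real.exp (f z)) (Measure.pi fun _ : Fin d => gaussianReal 0 1) := by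
  have hprod : Integrable (fun z : Fin d → ℝ => ∏ i, Real.exp (c * (z i) ^ 2))
      (Measure.pi fun _ : Fin d => gaussianReal 0 1) := by
    letI : MeasureSpace ℝ := ⟨gaussianReal 0 1⟩
    haveI : SigmaFinite (volume : Measure ℝ) := inferInstanceAs (SigmaFinite (gaussianReal 0 1))
    exact Integrable.fintype_prod (fun _ => gauss1 hc)
  refine hprod.mono ((Real.continuous_exp.comp hf).aestronglyMeasurable) (ae_of_all _ fun z => ?_)
  rw [Real.norm_eq_abs, Real.abs_exp, Real.norm_eq_abs]
  have he : ∏ i, Real.exp (c * (z i) ^ 2) = Real.exp (c * ∑ i, (z i) ^ 2) := by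
    rw [← Real.exp_sum, Finset.mul_sum]
  rw [he, abs_of_pos (Real.exp_pos _)]
  exact Real.exp_le_exp.2 (hb z)

end AuxLemmas


section Aux2

variable {ι κ : Type*} [Fintype ι] [Fintype κ]

lemma msqrt_eq {ι : Type*} [Fintype ι] [DecidableEq ι] {S : Matrix ι ι ℝ}
    (h : S.PosSemidef) : msqrt S = cfc Real.sqrt S := by
  rw [h.1.cfc_eq]; unfold msqrt; rw [dif_pos h]; simp [IsHermitian.cfc]; rfl

lemma msqrt_transpose {ι : Type*} [Fintype ι] [DecidableEq ι] {S : Matrix ι ι ℝ}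
    (h : S.PosSemidef) : (msqrt S)ᵀ = msqrt S := by
  rw [msqrt_eq h, ← Matrix.conjTranspose_eq_transpose_of_trivial]
  exact (cfc_predicate Real.sqrt S : IsSelfAdjoint _).star_eq

lemma msqrt_mul_self {ι : Type*} [Fintype ι] [DecidableEq ι] {S : Matrix ι ι ℝ}
    (h : S.PosSemidef) : msqrt S * msqrt S = S := by
  rw [msqrt_eq h, ← cfc_mul Real.sqrt Real.sqrt S]
  conv_rhs => rw [← cfc_id' ℝ S h.1.isSelfAdjoint]
  refine cfc_congr fun x hx => ?_
  rw [h.1.spectrum_real_eq_range_eigenvalues] at hx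
  obtain ⟨k, rfl⟩ := hx
  exact Real.mul_self_sqrt (h.eigenvalues_nonneg k)

lemma opN_bdd (A : Matrix ι κ ℝ) :
    BddAbove {r | ∃ x : κ → ℝ, vnorm x ≤ 1 ∧ r = vnorm (A.mulVec x)} := by
  refine ⟨frob A, fun r hr => ?_⟩
  obtain ⟨x, hx, rfl⟩ := hr
  calc vnorm (A.mulVec x) ≤ frob A * vnorm x := vnorm_mulVec_le A x
    _ ≤ frob A * 1 := mul_le_mul_of_nonneg_left hx (frob_nonneg A)
    _ = frob A := mul_one _

lemma sval_bdd (A : Matrix ι κ ℝ) :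
    BddAbove {r | ∃ x : κ → ℝ, vnorm x = 1 ∧ r = vnorm (A.mulVec x)} := by
  refine ⟨frob A, fun r hr => ?_⟩
  obtain ⟨x, hx, rfl⟩ := hr
  calc vnorm (A.mulVec x) ≤ frob A * vnorm x := vnorm_mulVec_le A x
    _ = frob A := by rw [hx, mul_one]

lemma vnorm_zero : vnorm (0 : ι → ℝ) = 0 := vnorm_eq_zero_iff.2 rfl

lemma opN_nonneg (A : Matrix ι κ ℝ) : 0 ≤ opN A := by
  refine le_csSup (opN_bdd A) ⟨0, ?_, ?_⟩
  · rw [vnorm_zero]; norm_num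
  · rw [Matrix.mulVec_zero, vnorm_zero]

lemma mulVec_le_opN (A : Matrix ι κ ℝ) (z : κ → ℝ) :
    vnorm (A.mulVec z) ≤ opN A * vnorm z := by
  rcases eq_or_ne (vnorm z) 0 with h0 | h0
  · rw [vnorm_eq_zero_iff.1 h0]
    simp [Matrix.mulVec_zero, vnorm_zero]
  · have ht : 0 < vnorm z := lt_of_le_of_ne (vnorm_nonneg z) (Ne.symm h0)
    have hmem : vnorm (A.mulVec ((vnorm z)⁻¹ • z)) ≤ opN A := by
      refine le_csSup (opN_bdd A) ⟨(vnorm z)⁻¹ • z, ?_, rfl⟩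
      rw [vnorm_smul, abs_of_nonneg (inv_nonneg.2 (vnorm_nonneg z)), inv_mul_cancel₀ h0]
    rw [Matrix.mulVec_smul, vnorm_smul, abs_of_nonneg (inv_nonneg.2 (vnorm_nonneg z))] at hmem
    calc vnorm (A.mulVec z) = ((vnorm z)⁻¹ * vnorm (A.mulVec z)) * vnorm z := by
          field_simp
      _ ≤ opN A * vnorm z := mul_le_mul_of_nonneg_right hmem (vnorm_nonneg z)

lemma sval_mem_le (A : Matrix ι κ ℝ) {x : κ → ℝ} (hx : vnorm x = 1) :
    vnorm (A.mulVec x) ≤ svalMax A :=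
  le_csSup (sval_bdd A) ⟨x, hx, rfl⟩

lemma vnorm_msqrt_le {d : ℕ} {Sig : Matrix (Fin d) (Fin d) ℝ} (hS : Sig.PosSemidef)
    (z : Fin d → ℝ) :
    vnorm ((msqrt Sig).mulVec z) ≤ Real.sqrt (opN Sig) * vnorm z := by
  refine vnorm_le_of_sq_le
    (mul_nonneg (Real.sqrt_nonneg _) (vnorm_nonneg z)) ?_
  have hdot : ((msqrt Sig).mulVec z) ⬝ᵥ ((msqrt Sig).mulVec z) = z ⬝ᵥ Sig.mulVec z := by
    rw [Matrix.dotProduct_mulVec, ← Matrix.mulVec_transpose, Matrix.mulVec_mulVec,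
      msqrt_transpose hS, msqrt_mul_self hS, dotProduct_comm]
  rw [← dot_self_eq, hdot, mul_pow, Real.sq_sqrt (opN_nonneg Sig), vnorm_sq]
  calc z ⬝ᵥ Sig.mulVec z ≤ vnorm z * vnorm (Sig.mulVec z) := dot_le _ _
    _ ≤ vnorm z * (opN Sig * vnorm z) :=
        mul_le_mul_of_nonneg_left (mulVec_le_opN Sig z) (vnorm_nonneg z)
    _ = opN Sig * (vnorm z * vnorm z) := by ring
    _ = opN Sig * ∑ i, (z i) ^ 2 := by rw [← vnorm_sq z]; ring

lemma Pinner_vcat {d p : ℕ} (Sig : Matrix (Fin d) (Fin d) ℝ)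
    (X : Matrix (Fin p) (Fin d) ℝ) (E : Matrix (Fin d) (Fin d) ℝ) :
    Pinner Sig (vcat X E) (vcat X E) = (Xᵀ * X).trace + (Eᵀ * (Sig * E)).trace := by
  simp only [Pinner, Pmat, vcat, Matrix.trace, Matrix.diag, Matrix.mul_apply,
    Fintype.sum_sum_type, Matrix.fromBlocks_apply₁₁, Matrix.fromBlocks_apply₁₂,
    Matrix.fromBlocks_apply₂₁, Matrix.fromBlocks_apply₂₂, Matrix.transpose_apply,
    Matrix.of_apply, Sum.elim_inl, Sum.elim_inr, Matrix.one_apply, Matrix.zero_apply,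
    mul_zero, mul_ite, mul_one, Finset.sum_ite_eq', Finset.mem_univ, if_true,
    Finset.sum_const_zero, add_zero, zero_add]
  rw [← Finset.sum_add_distrib]
  refine Finset.sum_congr rfl fun x _ => ?_
  congr 1
  simp_rw [Finset.sum_mul]
  rw [Finset.sum_comm]
  refine Finset.sum_congr rfl fun i _ => ?_
  rw [Finset.mul_sum]
  exact Finset.sum_congr rfl fun k _ => by show E i x * Sig i k * E k x = _; ring

end Aux2


/-- Integrability of certain exponential moments near the manifold of global minima. -/
theorem integrability_near_manifold
    {d p : ℕ} (hdp : d ≤ p)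
    (Sig : Matrix (Fin d) (Fin d) ℝ) (M : Matrix (Fin p) (Fin d) ℝ)
    (hSig : Sig.PosDef)
    (U : Matrix (Fin p) (Fin d) ℝ) (Γ V : Matrix (Fin d) (Fin d) ℝ)
    (hrank : (M * msqrt Sig).rank = d)
    (hU : Uᵀ * U = 1) (hV : Vᵀ * V = 1)
    (hΓdiag : Γ.IsDiag) (hΓpos : ∀ i, 0 < Γ i i)
    (hSVD : M * msqrt Sig = U * Γ * Vᵀ)
    (h16 : Real.sqrt (svalMax (M * msqrt Sig)) < 1/16)
    (A : Matrix (Fin p) (Fin d) ℝ) (B : Matrix (Fin d) (Fin d) ℝ)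
    (hclose : ∃ s ∈ Sman Sig U Γ V, Pnorm Sig (vcat A B - s) ≤ eps1 Sig M) :
    Integrable (fun x : Fin d → ℝ => Real.exp (8 * (x ⬝ᵥ B.mulVec x))) (gaussian Sig)
      ∧ Integrable (fun x : Fin d → ℝ =>
          Real.exp (16 * (x ⬝ᵥ (B * Sig * Bᵀ).mulVec x))) (gaussian Sig) := by
  classical
  -- Notation
  set R := msqrt Sig with hRdef
  have hPS : Sig.PosSemidef := hSig.posSemidef
  have hRT : Rᵀ = R := msqrt_transpose hPS
  have hRR : R * R = Sig := msqrt_mul_self hPS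
  have hRdet : IsUnit R.det := by
    have hd : R.det * R.det = Sig.det := by rw [← Matrix.det_mul, hRR]
    have hne : Sig.det ≠ 0 := ne_of_gt hSig.det_pos
    refine isUnit_iff_ne_zero.2 fun h0 => hne ?_
    rw [h0, mul_zero] at hd; exact hd.symm
  have hΓPD : Γ.PosDef := by
    have hdg : Γ = Matrix.diagonal (Matrix.diag Γ) := hΓdiag.diagonal_diag.symm
    rw [hdg]
    exact Matrix.posDef_diagonal_iff.2 fun i => hΓpos i
  set W := msqrt Γ with hWdef
  have hWT : Wᵀ = W := msqrt_transpose hΓPD.posSemidef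
  have hWW : W * W = Γ := msqrt_mul_self hΓPD.posSemidef
  set g := svalMax (M * msqrt Sig) with hgdef
  -- Γ entries are bounded by the largest singular value
  have hΓle : ∀ i, Γ i i ≤ g := by
    intro i
    have hsum : ∑ j, ((Pi.single i 1 : Fin d → ℝ) j) ^ 2 = 1 := by
      rw [Finset.sum_eq_single i]
      · rw [Pi.single_eq_same]; norm_num
      · intro k _ hk; rw [Pi.single_eq_of_ne hk]; norm_num
      · intro h; exact absurd (Finset.mem_univ i) h
    have he1 : vnorm (Pi.single i 1 : Fin d → ℝ) = 1 := by rw [vnorm, hsum, Real.sqrt_one]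
    have hx1 : vnorm (V.mulVec (Pi.single i 1 : Fin d → ℝ)) = 1 := by rw [vnorm_orth hV, he1]
    have hΓe : Γ.mulVec (Pi.single i 1 : Fin d → ℝ) = Γ i i • (Pi.single i 1 : Fin d → ℝ) := by
      funext j
      simp only [Matrix.mulVec_single, mul_one, Pi.smul_apply, Pi.single_apply, smul_eq_mul]
      by_cases hji : j = i
      · subst hji; simp
      · simp [hji, Matrix.col, hΓdiag hji]
    have hMx : (M * msqrt Sig).mulVec (V.mulVec (Pi.single i 1 : Fin d → ℝ))
        = Γ i i • (U.mulVec (Pi.single i 1 : Fin d → ℝ)) := by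
      rw [Matrix.mulVec_mulVec, hSVD, Matrix.mul_assoc (U * Γ), hV, Matrix.mul_one,
        ← Matrix.mulVec_mulVec, hΓe, Matrix.mulVec_smul]
    have := sval_mem_le (M * msqrt Sig) hx1
    rw [hMx, vnorm_smul, vnorm_orth hU, he1, mul_one,
      abs_of_pos (hΓpos i)] at this
    exact this
  have hgnn : 0 ≤ g := by
    rcases Nat.eq_zero_or_pos d with hd | hd
    · have hempty : {r | ∃ x : Fin d → ℝ, vnorm x = 1 ∧ r = vnorm ((M * msqrt Sig).mulVec x)}
          = ∅ := by
        ext r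
        simp only [Set.mem_setOf_eq, Set.mem_empty_iff_false, iff_false, not_exists]
        rintro x ⟨hx, -⟩
        have hv0 : vnorm x = 0 := by
          rw [vnorm]
          have : (Finset.univ : Finset (Fin d)) = ∅ := by
            rw [← Finset.card_eq_zero, Finset.card_univ, Fintype.card_fin, hd]
          rw [this, Finset.sum_empty, Real.sqrt_zero]
        rw [hv0] at hx; norm_num at hx
      rw [hgdef, svalMax, hempty, Real.sSup_empty]
    · exact le_trans (le_of_lt (hΓpos ⟨0, hd⟩)) (hΓle ⟨0, hd⟩)
  -- W contracts by √g
  have hWle : ∀ u : Fin d → ℝ, vnorm (W.mulVec u) ≤ Real.sqrt g * vnorm u := by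
    intro u
    refine vnorm_le_of_sq_le (mul_nonneg (Real.sqrt_nonneg g) (vnorm_nonneg u)) ?_
    have hdot : (W.mulVec u) ⬝ᵥ (W.mulVec u) = u ⬝ᵥ Γ.mulVec u := by
      rw [Matrix.dotProduct_mulVec, ← Matrix.mulVec_transpose, Matrix.mulVec_mulVec, hWT, hWW,
        dotProduct_comm]
    have hdiag : u ⬝ᵥ Γ.mulVec u = ∑ j, Γ j j * (u j) ^ 2 := by
      refine Finset.sum_congr rfl fun j _ => ?_
      have : Γ.mulVec u j = Γ j j * u j := by
        rw [Matrix.mulVec, dotProduct, Finset.sum_eq_single j]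
        · intro k _ hk; rw [hΓdiag (Ne.symm hk), zero_mul]
        · intro h; exact absurd (Finset.mem_univ j) h
      rw [this]; ring
    rw [← dot_self_eq, hdot, hdiag, mul_pow, Real.sq_sqrt hgnn, vnorm_sq, Finset.mul_sum]
    exact Finset.sum_le_sum fun j _ =>
      mul_le_mul_of_nonneg_right (hΓle j) (sq_nonneg _)
  -- the gap
  have hgap : 0 < 1/16 - Real.sqrt g := by rw [hgdef]; linarith [h16]
  have heps : eps1 Sig M = (1 / (2 * Real.sqrt (opN Sig))) * (1/16 - Real.sqrt g) := rfl
  have hepsnn : 0 ≤ eps1 Sig M := by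
    rw [heps]
    have : (0:ℝ) ≤ 1 / (2 * Real.sqrt (opN Sig)) := by positivity
    nlinarith
  have hLe : Real.sqrt (opN Sig) * eps1 Sig M ≤ (1/16 - Real.sqrt g) / 2 := by
    rcases eq_or_lt_of_le (Real.sqrt_nonneg (opN Sig)) with h0 | h0
    · rw [← h0, zero_mul]; linarith
    · rw [heps, show Real.sqrt (opN Sig) * (1 / (2 * Real.sqrt (opN Sig))
        * (1/16 - Real.sqrt g)) = (1/16 - Real.sqrt g) / 2 by field_simp]
  -- unpack the closeness assumption
  obtain ⟨s, ⟨J, hJ, hsval⟩, hsle⟩ := hclose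
  set As := U * W * Jᵀ * R⁻¹ with hAs
  set Bs := R⁻¹ * V * W * Jᵀ * R⁻¹ with hBs
  have hsval' : s = vcat As Bs := hsval
  set E := B - Bs with hE
  -- frobenius bound on R * E
  have hsub : vcat A B - vcat As Bs = vcat (A - As) E := by
    ext i j
    cases i <;> rfl
  have hfr2 : frob (R * E) ^ 2 = (Eᵀ * (Sig * E)).trace := by
    rw [frob_sq_eq_trace, Matrix.transpose_mul, Matrix.mul_assoc,
      ← Matrix.mul_assoc Rᵀ R E, hRT, hRR]
  have hfrob : frob (R * E) ≤ eps1 Sig M := by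
    refine le_trans ?_ hsle
    rw [hsval', Pnorm, hsub, Pinner_vcat, ← hfr2, ← frob_sq_eq_trace]
    calc frob (R * E) = Real.sqrt (frob (R * E) ^ 2) := (Real.sqrt_sq (frob_nonneg _)).symm
      _ ≤ Real.sqrt (frob (A - As) ^ 2 + frob (R * E) ^ 2) :=
          Real.sqrt_le_sqrt (by nlinarith [sq_nonneg (frob (A - As))])
  -- decomposition of R * B * R
  have hRBs : R * Bs * R = V * W * Jᵀ := by
    rw [hBs, ← Matrix.mul_assoc, ← Matrix.mul_assoc, ← Matrix.mul_assoc, ← Matrix.mul_assoc,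
      Matrix.mul_nonsing_inv R hRdet, Matrix.one_mul, Matrix.nonsing_inv_mul_cancel_right _ _ hRdet]
  have hBdec : R * B * R = V * W * Jᵀ + R * E * R := by
    have hBsum : B = Bs + E := by rw [hE]; abel
    rw [hBsum, Matrix.mul_add, Matrix.add_mul, hRBs]
  set c : ℝ := Real.sqrt g + (1/16 - Real.sqrt g) / 2 with hc
  have hcpos : 0 < c := by
    have := Real.sqrt_nonneg g; rw [hc]; linarith
  have hc16 : c < 1/16 := by
    have h16' : Real.sqrt g < 1/16 := by rw [hgdef]; exact h16
    rw [hc]; linarith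
  -- the key operator-norm bound
  have hkey : ∀ z : Fin d → ℝ, vnorm ((R * B * R)ᵀ.mulVec z) ≤ c * vnorm z := by
    intro z
    rw [hBdec, Matrix.transpose_add, Matrix.add_mulVec]
    refine le_trans (vnorm_add_le _ _) ?_
    have hterm1 : vnorm ((V * W * Jᵀ)ᵀ.mulVec z) ≤ Real.sqrt g * vnorm z := by
      have ht : (V * W * Jᵀ)ᵀ = J * (W * Vᵀ) := by
        rw [Matrix.transpose_mul, Matrix.transpose_mul, Matrix.transpose_transpose, hWT]
      rw [ht, ← Matrix.mulVec_mulVec, vnorm_orth hJ, ← Matrix.mulVec_mulVec]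
      calc vnorm (W.mulVec (Vᵀ.mulVec z)) ≤ Real.sqrt g * vnorm (Vᵀ.mulVec z) := hWle _
        _ = Real.sqrt g * vnorm z := by
            rw [vnorm_orth (by rw [Matrix.transpose_transpose]; exact mul_eq_one_comm.mp hV) z]
    have hterm2 : vnorm ((R * E * R)ᵀ.mulVec z) ≤ (1/16 - Real.sqrt g) / 2 * vnorm z := by
      have ht : (R * E * R)ᵀ = R * (R * E)ᵀ := by
        rw [Matrix.transpose_mul, hRT]
      rw [ht, ← Matrix.mulVec_mulVec]
      calc vnorm (R.mulVec ((R * E)ᵀ.mulVec z))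
          ≤ Real.sqrt (opN Sig) * vnorm ((R * E)ᵀ.mulVec z) := vnorm_msqrt_le hPS _
        _ ≤ Real.sqrt (opN Sig) * (frob ((R * E)ᵀ) * vnorm z) :=
            mul_le_mul_of_nonneg_left (vnorm_mulVec_le _ _) (Real.sqrt_nonneg _)
        _ = Real.sqrt (opN Sig) * frob (R * E) * vnorm z := by rw [frob_transpose]; ring
        _ ≤ Real.sqrt (opN Sig) * eps1 Sig M * vnorm z := by
            refine mul_le_mul_of_nonneg_right ?_ (vnorm_nonneg z)
            exact mul_le_mul_of_nonneg_left hfrob (Real.sqrt_nonneg _)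
        _ ≤ (1/16 - Real.sqrt g) / 2 * vnorm z :=
            mul_le_mul_of_nonneg_right hLe (vnorm_nonneg z)
    calc vnorm ((V * W * Jᵀ)ᵀ.mulVec z) + vnorm ((R * E * R)ᵀ.mulVec z)
        ≤ Real.sqrt g * vnorm z + (1/16 - Real.sqrt g) / 2 * vnorm z :=
          add_le_add hterm1 hterm2
      _ = c * vnorm z := by rw [hc]; ring
  -- continuity facts
  have hcont : ∀ (C : Matrix (Fin d) (Fin d) ℝ), Continuous fun x : Fin d → ℝ => C.mulVec x := by
    intro C
    refine continuous_pi fun i => ?_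
    exact (continuous_finset_sum Finset.univ fun j (_ : j ∈ Finset.univ) =>
      continuous_const.mul (continuous_apply j)).congr fun x => rfl
  have hquad : ∀ (C : Matrix (Fin d) (Fin d) ℝ),
      Continuous fun x : Fin d → ℝ => x ⬝ᵥ C.mulVec x := by
    intro C
    exact continuous_finset_sum _ fun i _ =>
      (continuous_apply i).mul ((continuous_apply i).comp (hcont C))
  have hTm : AEMeasurable (R.mulVec)
      (Measure.pi fun _ : Fin d => ProbabilityTheory.gaussianReal 0 1) :=
    (hcont R).measurable.aemeasurable
  have hgen : ∀ (D : Matrix (Fin d) (Fin d) ℝ) (z : Fin d → ℝ),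
      (R.mulVec z) ⬝ᵥ D.mulVec (R.mulVec z) = z ⬝ᵥ (R * D * R).mulVec z := by
    intro D z
    rw [Matrix.mulVec_mulVec, Matrix.dotProduct_mulVec, Matrix.vecMul_mulVec,
      Matrix.dotProduct_mulVec z, hRT, Matrix.mul_assoc]
  have hdot1 : ∀ (C : Matrix (Fin d) (Fin d) ℝ) (z : Fin d → ℝ),
      z ⬝ᵥ C.mulVec z = (Cᵀ.mulVec z) ⬝ᵥ z := by
    intro C z
    rw [Matrix.dotProduct_mulVec, ← Matrix.mulVec_transpose]
  have hdot2 : ∀ (C : Matrix (Fin d) (Fin d) ℝ) (z : Fin d → ℝ),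
      z ⬝ᵥ (C * Cᵀ).mulVec z = (Cᵀ.mulVec z) ⬝ᵥ (Cᵀ.mulVec z) := by
    intro C z
    rw [← Matrix.mulVec_mulVec, Matrix.dotProduct_mulVec, ← Matrix.mulVec_transpose]
  constructor
  · -- first integrability
    rw [gaussian]
    refine (integrable_map_measure
      (Real.continuous_exp.comp (continuous_const.mul (hquad B))).aestronglyMeasurable hTm).mpr ?_
    have hcomp : ((fun x : Fin d → ℝ => Real.exp (8 * (x ⬝ᵥ B.mulVec x))) ∘ R.mulVec)
        = fun z : Fin d → ℝ => Real.exp (8 * (((R * B * R)ᵀ.mulVec z) ⬝ᵥ z)) := by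
      funext z
      simp only [Function.comp_apply]
      rw [hgen B z, hdot1]
    have hc2 : 8 * c < 1/2 := by linarith
    have hcnt : Continuous fun z : Fin d → ℝ => 8 * (((R * B * R)ᵀ.mulVec z) ⬝ᵥ z) :=
      continuous_const.mul (continuous_finset_sum _ fun i _ =>
        ((continuous_apply i).comp (hcont _)).mul (continuous_apply i))
    have hbound : ∀ z : Fin d → ℝ,
        8 * (((R * B * R)ᵀ.mulVec z) ⬝ᵥ z) ≤ 8 * c * ∑ i, (z i) ^ 2 := by
      intro z
      have h1 : ((R * B * R)ᵀ.mulVec z) ⬝ᵥ z ≤ c * vnorm z ^ 2 := by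
        calc ((R * B * R)ᵀ.mulVec z) ⬝ᵥ z ≤ vnorm ((R * B * R)ᵀ.mulVec z) * vnorm z :=
              dot_le _ _
          _ ≤ c * vnorm z * vnorm z := mul_le_mul_of_nonneg_right (hkey z) (vnorm_nonneg z)
          _ = c * vnorm z ^ 2 := by ring
      rw [show (8 : ℝ) * c * ∑ i, (z i) ^ 2 = 8 * (c * vnorm z ^ 2) by rw [vnorm_sq]; ring]
      linarith
    exact (gauss_pi hc2 hcnt hbound).congr (Filter.EventuallyEq.of_eq hcomp.symm)
  · -- second integrability
    rw [gaussian]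
    refine (integrable_map_measure
      (Real.continuous_exp.comp (continuous_const.mul (hquad _))).aestronglyMeasurable hTm).mpr ?_
    have hmat : R * (B * Sig * Bᵀ) * R = (R * B * R) * (R * B * R)ᵀ := by
      rw [Matrix.transpose_mul, Matrix.transpose_mul, hRT, ← hRR]
      simp only [Matrix.mul_assoc]
    have hcomp : ((fun x : Fin d → ℝ => Real.exp (16 * (x ⬝ᵥ (B * Sig * Bᵀ).mulVec x)))
        ∘ R.mulVec)
        = fun z : Fin d → ℝ =>
            Real.exp (16 * (((R * B * R)ᵀ.mulVec z) ⬝ᵥ ((R * B * R)ᵀ.mulVec z))) := by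
      funext z
      simp only [Function.comp_apply]
      rw [hgen _ z, hmat, hdot2]
    have hcc : c * c < 1/16 * (1/16) := mul_lt_mul'' hc16 hc16 hcpos.le hcpos.le
    have hc2 : 16 * c ^ 2 < 1/2 := by rw [sq]; linarith
    have hcnt : Continuous fun z : Fin d → ℝ =>
        16 * (((R * B * R)ᵀ.mulVec z) ⬝ᵥ ((R * B * R)ᵀ.mulVec z)) :=
      continuous_const.mul (continuous_finset_sum _ fun i _ =>
        ((continuous_apply i).comp (hcont _)).mul ((continuous_apply i).comp (hcont _)))
    have hbound : ∀ z : Fin d → ℝ,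
        16 * (((R * B * R)ᵀ.mulVec z) ⬝ᵥ ((R * B * R)ᵀ.mulVec z))
          ≤ 16 * c ^ 2 * ∑ i, (z i) ^ 2 := by
      intro z
      have h1 : ((R * B * R)ᵀ.mulVec z) ⬝ᵥ ((R * B * R)ᵀ.mulVec z) ≤ c ^ 2 * vnorm z ^ 2 := by
        rw [dot_self_eq, ← vnorm_sq]
        calc vnorm ((R * B * R)ᵀ.mulVec z) ^ 2 ≤ (c * vnorm z) ^ 2 :=
              pow_le_pow_left₀ (vnorm_nonneg _) (hkey z) 2
          _ = c ^ 2 * vnorm z ^ 2 := by ring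
      rw [show (16 : ℝ) * c ^ 2 * ∑ i, (z i) ^ 2 = 16 * (c ^ 2 * vnorm z ^ 2) by
        rw [vnorm_sq]; ring]
      linarith
    exact (gauss_pi hc2 hcnt hbound).congr (Filter.EventuallyEq.of_eq hcomp.symm)


end
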